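/- For vertices x, y, q of a connected graph G, the effective resistance satisfies r(x,y) = j_x(y,q) + j_y(x,q), where j_q(x,y) = κ₂(xy|q)/κ(G) is the potential kernel. -/
import Mathlib


open scoped Classical
open Matrix

/-- A finite multigraph without loop edges, given by endpoint maps on an edge type. -/
structure Multigraph where
  V : Type
  E : Type
  [fintV : Fintype V]
  [fintE : Fintype E]
  fst : E → V
  snd : E → V
  no_loop : ∀ e, fst e ≠ snd e

namespace Multigraph

variable (G : Multigraph)

instance : Fintype G.V := G.fintV
instance : Fintype G.E := G.fintE

/-- One step along an edge of the subgraph with edge set `S`. -/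
def step (S : Finset G.E) (u v : G.V) : Prop :=
  ∃ e ∈ S, (G.fst e = u ∧ G.snd e = v) ∨ (G.fst e = v ∧ G.snd e = u)

/-- Two vertices are in the same component of the spanning subgraph with edge set `S`. -/
def reach (S : Finset G.E) : G.V → G.V → Prop :=
  Relation.EqvGen (G.step S)

/-- Number of connected components of the spanning subgraph with edge set `S`. -/
noncomputable def ncomp (S : Finset G.E) : ℕ :=
  Nat.card (Quotient (Relation.EqvGen.setoid (G.step S)))

/-- The graph is connected. -/
def IsConnected : Prop := G.ncomp Finset.univ = 1

/-- `S` is the edge set of a spanning tree. -/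
def IsSpanningTree (S : Finset G.E) : Prop :=
  G.ncomp S = 1 ∧ S.card + 1 = Fintype.card G.V

/-- `S` is the edge set of a two-component spanning forest. -/
def IsTwoForest (S : Finset G.E) : Prop :=
  G.ncomp S = 2 ∧ S.card + 2 = Fintype.card G.V

/-- `S` is the edge set of a three-component spanning forest. -/
def IsThreeForest (S : Finset G.E) : Prop :=
  G.ncomp S = 3 ∧ S.card + 3 = Fintype.card G.V

/-- κ(G): number of spanning trees. -/
noncomputable def kappa : ℕ := Nat.card {S : Finset G.E // G.IsSpanningTree S}

/-- κ₂(G): number of two-component spanning forests. -/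
noncomputable def kappa2 : ℕ := Nat.card {S : Finset G.E // G.IsTwoForest S}

/-- κ₂(x|y): number of two-forests with `x` and `y` in different components. -/
noncomputable def kappa2Sep (x y : G.V) : ℕ :=
  Nat.card {S : Finset G.E // G.IsTwoForest S ∧ ¬ G.reach S x y}

/-- κ₂(xy|q): number of two-forests with `x`, `y` in one component, `q` in the other. -/
noncomputable def kappa2Tog (x y q : G.V) : ℕ :=
  Nat.card {S : Finset G.E // G.IsTwoForest S ∧ G.reach S x y ∧ ¬ G.reach S x q}

/-- κ₃(x|y|q): number of three-forests with `x`, `y`, `q` in pairwise distinct components. -/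
noncomputable def kappa3Sep (x y q : G.V) : ℕ :=
  Nat.card {S : Finset G.E //
    G.IsThreeForest S ∧ ¬ G.reach S x y ∧ ¬ G.reach S x q ∧ ¬ G.reach S y q}

/-- Effective resistance: r(x,y) = κ₂(x|y)/κ(G). -/
noncomputable def res (x y : G.V) : ℝ := (G.kappa2Sep x y : ℝ) / (G.kappa : ℝ)

/-- Potential kernel: j_q(x,y) = κ₂(xy|q)/κ(G). -/
noncomputable def jfun (q x y : G.V) : ℝ := (G.kappa2Tog x y q : ℝ) / (G.kappa : ℝ)

/-- Cut size |∂F| of a two-forest with edge set `S`: edges joining the two components. -/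
noncomputable def cutSize (S : Finset G.E) : ℕ :=
  Nat.card {e : G.E // ¬ G.reach S (G.fst e) (G.snd e)}

/-- The curvature vector μ. -/
noncomputable def mu (x : G.V) : ℝ :=
  1 - (1/2) * ∑ e : G.E,
    (if G.fst e = x ∨ G.snd e = x then G.res (G.fst e) (G.snd e) else 0)

/-- The Laplacian matrix of `G`. -/
noncomputable def lap : Matrix G.V G.V ℝ := fun v w =>
  (if v = w then (Nat.card {e : G.E // G.fst e = v ∨ G.snd e = v} : ℝ) else 0)
    - (Nat.card {e : G.E // (G.fst e = v ∧ G.snd e = w) ∨ (G.fst e = w ∧ G.snd e = v)} : ℝ)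

/-- The effective resistance matrix of `G`. -/
noncomputable def resMatrix : Matrix G.V G.V ℝ := fun v w => G.res v w

end Multigraph

namespace Multigraph

lemma reach_symm (G : Multigraph) {S : Finset G.E} {a b : G.V} (h : G.reach S a b) :
    G.reach S b a := Relation.EqvGen.symm _ _ h

lemma reach_trans (G : Multigraph) {S : Finset G.E} {a b c : G.V}
    (h : G.reach S a b) (h' : G.reach S b c) : G.reach S a c :=
  Relation.EqvGen.trans _ _ _ h h'

lemma dichotomy (G : Multigraph) {S : Finset G.E} (h2 : G.ncomp S = 2) {x y : G.V}
    (hxy : ¬ G.reach S x y) (q : G.V) : G.reach S x q ∨ G.reach S y q := by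
  rw [ncomp, Nat.card_eq_two_iff] at h2
  obtain ⟨a, b, hab, huniv⟩ := h2
  let s := Relation.EqvGen.setoid (G.step S)
  have key : ∀ z : G.V, (Quotient.mk s z = Quotient.mk s x) ∨ (Quotient.mk s z = Quotient.mk s y) := by
    intro z
    have hmem : ∀ c : Quotient s, c = a ∨ c = b := by
      intro c
      have : c ∈ ({a, b} : Set (Quotient s)) := by rw [huniv]; exact Set.mem_univ c
      simpa using this
    have hxq : Quotient.mk s x ≠ Quotient.mk s y := by
      intro h
      exact hxy (Quotient.eq.mp h)
    rcases hmem (Quotient.mk s x) with hx | hx <;>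
      rcases hmem (Quotient.mk s y) with hy | hy <;>
      rcases hmem (Quotient.mk s z) with hz | hz <;>
      first
        | (exact absurd (hx.trans hy.symm) hxq)
        | (exact Or.inl (hz.trans hx.symm))
        | (exact Or.inr (hz.trans hy.symm))
  rcases key q with h | h
  · exact Or.inl (G.reach_symm (Quotient.eq.mp h))
  · exact Or.inr (G.reach_symm (Quotient.eq.mp h))

end Multigraph

theorem resistance_as_sum_of_potentials (G : Multigraph) (hG : G.IsConnected) (x y q : G.V) :
    G.res x y = G.jfun x y q + G.jfun y x q := by
  classical
  have hcard : G.kappa2Sep x y = G.kappa2Tog y q x + G.kappa2Tog x q y := by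
    unfold Multigraph.kappa2Sep Multigraph.kappa2Tog
    rw [Nat.card_eq_fintype_card, Nat.card_eq_fintype_card, Nat.card_eq_fintype_card]
    have hiff : ∀ S : Finset G.E,
        (G.IsTwoForest S ∧ ¬ G.reach S x y) ↔
        ((G.IsTwoForest S ∧ G.reach S y q ∧ ¬ G.reach S y x) ∨
         (G.IsTwoForest S ∧ G.reach S x q ∧ ¬ G.reach S x y)) := by
      intro S
      constructor
      · rintro ⟨hF, hxy⟩
        rcases G.dichotomy hF.1 hxy q with h | h
        · exact Or.inr ⟨hF, h, hxy⟩
        · exact Or.inl ⟨hF, h, fun hyx => hxy (G.reach_symm hyx)⟩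
      · rintro (⟨hF, _, hyx⟩ | ⟨hF, _, hxy⟩)
        · exact ⟨hF, fun hxy => hyx (G.reach_symm hxy)⟩
        · exact ⟨hF, hxy⟩
    have hdisj : Disjoint (fun S => G.IsTwoForest S ∧ G.reach S y q ∧ ¬ G.reach S y x)
        (fun S => G.IsTwoForest S ∧ G.reach S x q ∧ ¬ G.reach S x y) := by
      rw [Pi.disjoint_iff]
      intro S
      simp only [Prop.disjoint_iff]
      rintro ⟨⟨_, hyq, hyx⟩, ⟨_, hxq, _⟩⟩
      exact hyx (G.reach_trans hyq (G.reach_symm hxq))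
    calc Fintype.card {S : Finset G.E // G.IsTwoForest S ∧ ¬ G.reach S x y}
        = Fintype.card {S : Finset G.E //
            (G.IsTwoForest S ∧ G.reach S y q ∧ ¬ G.reach S y x) ∨
            (G.IsTwoForest S ∧ G.reach S x q ∧ ¬ G.reach S x y)} := by
          apply Fintype.card_congr
          exact Equiv.subtypeEquivRight hiff
      _ = _ := Fintype.card_subtype_or_disjoint _ _ hdisj
  unfold Multigraph.res Multigraph.jfun
  rw [hcard, Nat.cast_add, add_div]
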